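/- arXiv:1407.5067 — 3 statements merged into one kernel-verified Lean document; each statement's English description precedes it below -/
import Mathlib

section
/- Let J be a q-periodic block Jacobi matrix on ℓ²(ℤ)^m with invertible off-diagonal blocks a_n (det a_n ≠ 0, a_{n+q}=a_n, b_{n+q}=b_n). Fix λ ∈ ℂ. Then λ cannot be an eigenvalue of the Floquet matrices J_θ for more than 2m distinct values of θ ∈ [0,2π). -/
open Complex Finset

/-- The block of the block Jacobi matrix `J` between block-row `k` and block-column `t`
(nonzero only for `t ∈ {k-1, k, k+1}`): `J_{k,k} = b_k`, `J_{k,k+1} = a_k`,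
`J_{k,k-1} = (a_{k-1})^*`. -/
noncomputable def jacobiBlock {m : ℕ} (a b : ℤ → Matrix (Fin m) (Fin m) ℂ) (k t : ℤ) :
    Matrix (Fin m) (Fin m) ℂ :=
  if t = k then b k else if t = k + 1 then a k else (a (k - 1)).conjTranspose

/-- The Floquet matrix `J_θ` of a `q`-periodic block Jacobi matrix: the `mq × mq`
tridiagonal block matrix with diagonal blocks `b_k`, superdiagonal blocks `a_k`,
subdiagonal blocks `a_{k-1}^*`, and corner entries carrying phases `e^{∓iθ}`.
Entry formula: `(J_θ)_{k,l} = Σ_{t ≡ l (mod q), |t-k| ≤ 1} e^{iθ(t-l)/q} J_{k,t}`. -/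
noncomputable def floquetJ (q m : ℕ) (a b : ℤ → Matrix (Fin m) (Fin m) ℂ) (θ : ℝ) :
    Matrix (Fin q × Fin m) (Fin q × Fin m) ℂ :=
  Matrix.of fun p r =>
    ∑ t ∈ ({(p.1 : ℤ) - 1, (p.1 : ℤ), (p.1 : ℤ) + 1} : Finset ℤ),
      if (t - (r.1 : ℤ)) % (q : ℤ) = 0 then
        Complex.exp (Complex.I * θ * (((t - (r.1 : ℤ)) / (q : ℤ) : ℤ) : ℂ)) *
          (jacobiBlock a b (p.1 : ℤ) t) p.2 r.2
      else 0


/-! An eigenvector `v` of `J_θ` for `λ` extends to the sequence `u (n * q + r) = e^{inθ} v_r`,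
which solves the difference equation `(J - λ) u = 0` on all of `ℤ` and is an eigenvector of the
shift by `q` with eigenvalue `e^{iθ}`. Distinct `θ ∈ [0, 2π)` give distinct eigenvalues of the
shift, hence linearly independent solutions. Since every `a n` is invertible, a solution is
determined by `(u 0, u 1)`, so there are at most `2 * m` of them. -/

open Module Matrix

section Jacobi

variable {m : ℕ} (a b : ℤ → Matrix (Fin m) (Fin m) ℂ)

/-- The block Jacobi operator on all sequences, not only on `ℓ²`: its `λ`-eigenspace is the
whole solution space of the difference equation. -/
def jacobiOp : End ℂ (ℤ → Fin m → ℂ) where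
  toFun u k := (a (k - 1))ᴴ *ᵥ u (k - 1) + b k *ᵥ u k + a k *ᵥ u (k + 1)
  map_add' u w := by
    ext k : 1
    simp only [Pi.add_apply, mulVec_add]
    abel
  map_smul' c u := by
    ext k : 1
    simp only [Pi.smul_apply, mulVec_smul, smul_add, RingHom.id_apply]

theorem jacobiOp_apply (u : ℤ → Fin m → ℂ) (k : ℤ) :
    jacobiOp a b u k = (a (k - 1))ᴴ *ᵥ u (k - 1) + b k *ᵥ u k + a k *ᵥ u (k + 1) :=
  rfl

theorem jacobiOp_apply_eq_sum_jacobiBlock (u : ℤ → Fin m → ℂ) (k : ℤ) :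
    jacobiOp a b u k = ∑ t ∈ ({k - 1, k, k + 1} : Finset ℤ), jacobiBlock a b k t *ᵥ u t := by
  have hne : k - 1 ≠ k + 1 := by omega
  rw [Finset.sum_insert (by simp [hne]), Finset.sum_insert (by simp), Finset.sum_singleton]
  simp [jacobiOp_apply, jacobiBlock, hne, add_assoc]

theorem jacobiOp_apply_add_period {q : ℕ} (ha_per : ∀ n, a (n + q) = a n)
    (hb_per : ∀ n, b (n + q) = b n) (u : ℤ → Fin m → ℂ) (k : ℤ) :
    jacobiOp a b u (k + q) = jacobiOp a b (fun k ↦ u (k + q)) k := by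
  rw [jacobiOp_apply, jacobiOp_apply, add_sub_right_comm, add_right_comm k, ha_per, ha_per,
    hb_per]

def initialValues (R M : Type*) [Semiring R] [AddCommMonoid M] [Module R M] :
    (ℤ → M) →ₗ[R] M × M :=
  (LinearMap.proj 0).prod (LinearMap.proj 1)

variable {a b}

theorem disjoint_eigenspace_jacobiOp_ker_initialValues (ha_det : ∀ n, (a n).det ≠ 0)
    (lam : ℂ) :
    Disjoint ((jacobiOp a b).eigenspace lam) (LinearMap.ker (initialValues ℂ (Fin m → ℂ))) := by
  rw [Submodule.disjoint_def]
  intro u hu hu01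
  have hrec (k : ℤ) :
      (a (k - 1))ᴴ *ᵥ u (k - 1) + b k *ᵥ u k + a k *ᵥ u (k + 1) = lam • u k :=
    congrFun (End.mem_eigenspace_iff.mp hu) k
  obtain ⟨h0, h1⟩ : u 0 = 0 ∧ u 1 = 0 := Prod.mk_eq_zero.mp hu01
  have hdet_adj : ∀ n, (a n)ᴴ.det ≠ 0 := fun n ↦ by simpa [det_conjTranspose] using ha_det n
  suffices h : ∀ k, u k = 0 ∧ u (k + 1) = 0 from funext fun k ↦ (h k).1
  intro k
  induction k using Int.induction_on with
  | zero => simpa using ⟨h0, h1⟩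
  | succ k ih =>
    refine ⟨ih.2, eq_zero_of_mulVec_eq_zero (ha_det (k + 1)) ?_⟩
    simpa [ih.1, ih.2] using hrec (k + 1)
  | pred k ih =>
    refine ⟨eq_zero_of_mulVec_eq_zero (hdet_adj (-k - 1)) ?_, by simpa using ih.1⟩
    simpa [ih.1, ih.2] using hrec (-k)

theorem LinearIndependent.card_le_of_mem_eigenspace_jacobiOp {ι : Type*} [Fintype ι]
    (ha_det : ∀ n, (a n).det ≠ 0) {lam : ℂ} {u : ι → ℤ → Fin m → ℂ}
    (hu : LinearIndependent ℂ u) (hsol : ∀ i, u i ∈ (jacobiOp a b).eigenspace lam) :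
    Fintype.card ι ≤ 2 * m := by
  have hspan : Submodule.span ℂ (Set.range u) ≤ (jacobiOp a b).eigenspace lam :=
    Submodule.span_le.mpr (Set.range_subset_iff.mpr hsol)
  have := (hu.map ((disjoint_eigenspace_jacobiOp_ker_initialValues ha_det lam).mono_left
    hspan)).fintype_card_le_finrank
  simpa [finrank_prod, two_mul] using this

end Jacobi

theorem eq_zero_of_apply_add_eq_smul {K M : Type*} [Field K] [AddCommGroup M] [Module K M]
    {q : ℕ} [NeZero q] {c : K} (hc : c ≠ 0) {w : ℤ → M} (hw : ∀ k, w (k + q) = c • w k)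
    (hw₀ : ∀ r : Fin q, w r = 0) : w = 0 := by
  funext k
  obtain ⟨⟨n, r⟩, rfl⟩ := (Int.divModEquiv q).symm.surjective k
  simp only [Int.divModEquiv_symm_apply, Pi.zero_apply]
  induction n using Int.induction_on with
  | zero => simpa using hw₀ r
  | succ n ih => rw [add_mul, one_mul, add_right_comm, hw, ih, smul_zero]
  | pred n ih =>
    have h := hw ((-n - 1) * q + r)
    rw [show (-n - 1 : ℤ) * q + r + q = -n * q + r by ring, ih] at h
    exact (smul_eq_zero.mp h.symm).resolve_left hc

section Floquet

variable {q : ℕ} [NeZero q] {ι : Type*}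

noncomputable def floquetExt (v : Fin q × ι → ℂ) (θ : ℝ) (k : ℤ) (i : ι) : ℂ :=
  exp (I * θ * (Int.divModEquiv q k).1) * v ((Int.divModEquiv q k).2, i)

theorem floquetExt_mul_add (v : Fin q × ι → ℂ) (θ : ℝ) (n : ℤ) (r : Fin q) (i : ι) :
    floquetExt v θ (n * q + r) i = exp (I * θ * n) * v (r, i) := by
  have h : n * q + r = (Int.divModEquiv q).symm (n, r) := rfl
  rw [floquetExt, h, Equiv.apply_symm_apply]

theorem floquetExt_natCast (v : Fin q × ι → ℂ) (θ : ℝ) (r : Fin q) :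
    floquetExt v θ r = fun i ↦ v (r, i) := by
  ext i
  simpa using floquetExt_mul_add v θ 0 r i

theorem floquetExt_add_period (v : Fin q × ι → ℂ) (θ : ℝ) (k : ℤ) :
    floquetExt v θ (k + q) = exp (I * θ) • floquetExt v θ k := by
  obtain ⟨⟨n, r⟩, rfl⟩ := (Int.divModEquiv q).symm.surjective k
  ext i
  have h : n * q + r + q = (n + 1) * q + r := by ring
  simp only [Int.divModEquiv_symm_apply, h, floquetExt_mul_add, Pi.smul_apply, smul_eq_mul]
  push_cast
  rw [mul_add, mul_one, exp_add]
  ring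

theorem floquetExt_ne_zero {v : Fin q × ι → ℂ} (hv : v ≠ 0) (θ : ℝ) : floquetExt v θ ≠ 0 := by
  obtain ⟨⟨r, i⟩, hri⟩ := Function.ne_iff.mp hv
  intro h
  exact hri (by simpa [floquetExt_natCast] using congrFun (congrFun h r) i)

theorem hasEigenvector_funLeft_add_floquetExt {v : Fin q × ι → ℂ} (hv : v ≠ 0) (θ : ℝ) :
    End.HasEigenvector (LinearMap.funLeft ℂ (ι → ℂ) (· + (q : ℤ))) (exp (I * θ))
      (floquetExt v θ) :=
  End.hasEigenvector_iff.mpr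
    ⟨End.mem_eigenspace_iff.mpr (funext (floquetExt_add_period v θ)),
      floquetExt_ne_zero hv θ⟩

theorem sum_ite_emod_mul_eq_floquetExt (v : Fin q × ι → ℂ) (θ : ℝ) (t : ℤ) (i : ι) :
    ∑ r : Fin q, (if (t - r) % (q : ℤ) = 0 then exp (I * θ * (((t - r) / q : ℤ) : ℂ)) else 0) *
      v (r, i) = floquetExt v θ t i := by
  obtain ⟨⟨n, r₀⟩, rfl⟩ := (Int.divModEquiv q).symm.surjective t
  simp only [Int.divModEquiv_symm_apply]
  rw [Finset.sum_eq_single r₀, floquetExt_mul_add]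
  · simp [Int.mul_ediv_cancel _ (NeZero.ne (q : ℤ))]
  · intro r _ hr
    rw [if_neg, zero_mul]
    intro hdvd
    obtain ⟨c, hc⟩ := Int.dvd_of_emod_eq_zero hdvd
    have h : (Int.divModEquiv q).symm (0, r) = (Int.divModEquiv q).symm (n - c, r₀) := by
      simp only [Int.divModEquiv_symm_apply]
      linear_combination -hc
    exact hr (congrArg Prod.snd ((Int.divModEquiv q).symm.injective h))
  · simp

end Floquet

theorem floquetJ_mulVec_apply {q m : ℕ} [NeZero q] (a b : ℤ → Matrix (Fin m) (Fin m) ℂ)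
    (θ : ℝ) (v : Fin q × Fin m → ℂ) (p : Fin q × Fin m) :
    (floquetJ q m a b θ *ᵥ v) p = jacobiOp a b (floquetExt v θ) p.1 p.2 := by
  rw [jacobiOp_apply_eq_sum_jacobiBlock]
  simp only [Finset.sum_apply, mulVec, dotProduct, floquetJ, of_apply, Fintype.sum_prod_type,
    ← sum_ite_emod_mul_eq_floquetExt, Finset.sum_mul, Finset.mul_sum]
  rw [Finset.sum_comm]
  conv_rhs => rw [Finset.sum_comm]; enter [2, j]; rw [Finset.sum_comm]
  refine Finset.sum_congr rfl fun j _ ↦ Finset.sum_congr rfl fun r _ ↦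
    Finset.sum_congr rfl fun t _ ↦ ?_
  split_ifs <;> ring

theorem jacobiOp_floquetExt {q m : ℕ} [NeZero q] {a b : ℤ → Matrix (Fin m) (Fin m) ℂ}
    (ha_per : ∀ n, a (n + q) = a n) (hb_per : ∀ n, b (n + q) = b n) {θ : ℝ}
    {v : Fin q × Fin m → ℂ} {lam : ℂ} (hv : floquetJ q m a b θ *ᵥ v = lam • v) :
    jacobiOp a b (floquetExt v θ) = lam • floquetExt v θ := by
  have hshift : (fun k ↦ floquetExt v θ (k + q)) = exp (I * θ) • floquetExt v θ :=
    funext (floquetExt_add_period v θ)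
  -- the residual `(J - λ) u` is again `e^{iθ}`-quasiperiodic, and vanishes on `0, …, q - 1`
  -- by the eigenvalue equation for `J_θ`
  rw [← sub_eq_zero]
  refine eq_zero_of_apply_add_eq_smul (q := q) (exp_ne_zero (I * θ)) (fun k ↦ ?_) (fun r ↦ ?_)
  · rw [Pi.sub_apply, jacobiOp_apply_add_period a b ha_per hb_per, hshift]
    simp only [Pi.sub_apply, Pi.smul_apply, floquetExt_add_period, map_smul, smul_sub,
      smul_comm lam]
  · rw [Pi.sub_apply, sub_eq_zero]
    ext j
    have h := congrFun hv (r, j)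
    rw [floquetJ_mulVec_apply] at h
    simpa [floquetExt_natCast] using h

theorem injOn_exp_I_mul_Ico : Set.InjOn (fun θ : ℝ ↦ exp (I * θ)) (Set.Ico 0 (2 * Real.pi)) :=
  fun θ₁ h₁ θ₂ h₂ h ↦ Circle.exp_injOn_Ico (by simp) h₁ h₂ <|
    Subtype.ext (by simpa [Circle.coe_exp, mul_comm] using h)

theorem stmt2_general (q m : ℕ) (hq : 0 < q)
    (a b : ℤ → Matrix (Fin m) (Fin m) ℂ)
    (ha_per : ∀ n, a (n + q) = a n) (hb_per : ∀ n, b (n + q) = b n)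
    (ha_det : ∀ n, (a n).det ≠ 0)
    (lam : ℂ) :
    ∀ S : Finset ℝ, (↑S ⊆ Set.Ico (0 : ℝ) (2 * Real.pi)) →
      (∀ θ ∈ S, ∃ v : Fin q × Fin m → ℂ, v ≠ 0 ∧
        (floquetJ q m a b θ).mulVec v = lam • v) →
      S.card ≤ 2 * m := by
  intro S hS hev
  have : NeZero q := ⟨hq.ne'⟩
  choose v hv₀ hv using fun θ : S ↦ hev θ θ.2
  have hind : LinearIndependent ℂ fun θ : S ↦ floquetExt (v θ) θ :=
    End.eigenvectors_linearIndependent' _ (fun θ : S ↦ exp (I * θ))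
      (fun θ₁ θ₂ h ↦ Subtype.ext (injOn_exp_I_mul_Ico (hS θ₁.2) (hS θ₂.2) h)) _
      fun θ ↦ hasEigenvector_funLeft_add_floquetExt (hv₀ θ) θ
  simpa using hind.card_le_of_mem_eigenspace_jacobiOp ha_det
    fun θ ↦ End.mem_eigenspace_iff.mpr (jacobiOp_floquetExt ha_per hb_per (hv θ))

/-- For a `q`-periodic block Jacobi matrix with invertible off-diagonal
blocks, a fixed `λ ∈ ℂ` cannot be an eigenvalue of the Floquet matrices `J_θ` for more
than `2m` distinct values of `θ ∈ [0, 2π)`. -/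
theorem stmt2 (q m : ℕ) (hq : 0 < q)
    (a b : ℤ → Matrix (Fin m) (Fin m) ℂ)
    (ha_per : ∀ n, a (n + q) = a n) (hb_per : ∀ n, b (n + q) = b n)
    (hb_herm : ∀ n, (b n).IsHermitian)
    (ha_det : ∀ n, (a n).det ≠ 0)
    (lam : ℂ) :
    ∀ S : Finset ℝ, (↑S ⊆ Set.Ico (0 : ℝ) (2 * Real.pi)) →
      (∀ θ ∈ S, ∃ v : Fin q × Fin m → ℂ, v ≠ 0 ∧
        (floquetJ q m a b θ).mulVec v = lam • v) →
      S.card ≤ 2 * m :=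
  stmt2_general q m hq a b ha_per hb_per ha_det lam
end

section
/- Let J_θ be the Floquet matrices of a q-periodic block Jacobi matrix and A_θ the corresponding Floquet matrices of A = i[J,X]. Let λ_j(θ) be a branch of eigenvalues of J_θ analytic in θ, with associated analytic orthogonal eigenprojection P_j(θ) (at values of θ where λ_j is a simple branch). Then P_j(θ) A_θ P_j(θ) = q (dλ_j/dθ)(θ) P_j(θ). -/
open Complex Finset

/-- Blocks of `A = i[J, X]`: `A_{k,k} = 0`, `A_{k,k+1} = i a_k`,
`A_{k,k-1} = -i (a_{k-1})^*`. -/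
noncomputable def velocityBlock {m : ℕ} (a : ℤ → Matrix (Fin m) (Fin m) ℂ) (k t : ℤ) :
    Matrix (Fin m) (Fin m) ℂ :=
  if t = k then 0
  else if t = k + 1 then Complex.I • a k
  else (-Complex.I) • (a (k - 1)).conjTranspose

/-- The Floquet matrix of a `q`-periodic block operator with blocks `blk k t`
(supported on `|t - k| ≤ 1`), with corner phases `e^{±iθ}`:
`(M_θ)_{k,l} = Σ_{t ≡ l (mod q), |t-k| ≤ 1} e^{iθ(t-l)/q} blk_{k,t}`. -/
noncomputable def floquetOf (q m : ℕ) (blk : ℤ → ℤ → Matrix (Fin m) (Fin m) ℂ) (θ : ℝ) :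
    Matrix (Fin q × Fin m) (Fin q × Fin m) ℂ :=
  Matrix.of fun p r =>
    ∑ t ∈ ({(p.1 : ℤ) - 1, (p.1 : ℤ), (p.1 : ℤ) + 1} : Finset ℤ),
      if (t - (r.1 : ℤ)) % (q : ℤ) = 0 then
        Complex.exp (Complex.I * θ * (((t - (r.1 : ℤ)) / (q : ℤ) : ℤ) : ℂ)) *
          (blk (p.1 : ℤ) t) p.2 r.2
      else 0

/-!
Differentiating the Floquet phases `e^{iθ(t-l)/q}` entrywise gives the Floquet form of
`A = i[J, X]`, namely `A_θ = q ∂_θ J_θ + i [J_θ, X]` with `X = diag(k)` the position matrix.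
Since `P J_θ = J_θ P = λ P`, the commutator vanishes between two factors `P`, and the
Feynman–Hellmann identity `P (∂_θ J_θ) P = λ' P` gives the claim.
-/

open Matrix

-- Only the topology matters for derivatives, so any of the equivalent matrix norms will do.
attribute [local instance] Matrix.linftyOpNormedRing Matrix.linftyOpNormedAlgebra

theorem feynman_hellmann {𝔸 : Type*} [NormedRing 𝔸] [NormedAlgebra ℝ 𝔸]
    {F P : ℝ → 𝔸} {F' : 𝔸} {lam : ℝ → ℝ} {θ : ℝ}
    (hF : HasDerivAt F F' θ) (hP : DifferentiableAt ℝ P θ) (hlam : DifferentiableAt ℝ lam θ)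
    (hFP : ∀ s, F s * P s = lam s • P s) (hPF : P θ * F θ = lam θ • P θ)
    (hPP : P θ * P θ = P θ) :
    P θ * F' * P θ = deriv lam θ • P θ := by
  have hderiv : F' * P θ + F θ * deriv P θ = lam θ • deriv P θ + deriv lam θ • P θ :=
    (hF.mul hP.hasDerivAt).unique <| by
      rw [show F * P = lam • P from funext hFP]
      exact hlam.hasDerivAt.smul hP.hasDerivAt
  calc P θ * F' * P θ
      = P θ * (F' * P θ + F θ * deriv P θ) - (P θ * F θ) * deriv P θ := by
        noncomm_ring
    _ = deriv lam θ • P θ := by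
        rw [hderiv, hPF, mul_add, mul_smul_comm, mul_smul_comm, hPP, smul_mul_assoc]
        abel

theorem mul_commutator_mul_eq_zero {R A : Type*} [CommSemiring R] [Ring A] [Algebra R A]
    {F P : A} {c : R} (X : A) (hFP : F * P = c • P) (hPF : P * F = c • P) :
    P * (F * X - X * F) * P = 0 := by
  simp only [mul_sub, sub_mul, mul_assoc]
  rw [← mul_assoc P F, hPF, hFP]
  simp only [smul_mul_assoc, mul_smul_comm, sub_self]

namespace Matrix

variable {n R : Type*} [Fintype n] [CommRing R]

theorem mul_eq_smul_of_mulVec_eq_smul {F P : Matrix n n R} {c : R} (hPP : P * P = P)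
    (h : ∀ v, P *ᵥ v = v → F *ᵥ v = c • v) : F * P = c • P :=
  ext_iff_mulVec.2 fun v => by
    rw [← mulVec_mulVec, h _ (by rw [mulVec_mulVec, hPP]), smul_mulVec]

theorem IsHermitian.mul_comm_of_mul_eq_smul [StarRing R] {F P : Matrix n n R} {c : R}
    (hF : F.IsHermitian) (hP : P.IsHermitian) (hc : IsSelfAdjoint c) (h : F * P = c • P) :
    P * F = c • P := by
  simpa only [conjTranspose_mul, hF.eq, hP.eq, conjTranspose_smul, hc.star_eq] using
    congrArg (·ᴴ) h

theorem hasDerivAt_of_hasDerivAt_apply {𝕜 α : Type*} [DecidableEq n]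
    [NontriviallyNormedField 𝕜] [NormedRing α] [NormedAlgebra 𝕜 α] {M : 𝕜 → Matrix n n α}
    {M' : Matrix n n α} {θ : 𝕜}
    (h : ∀ i j, HasDerivAt (fun s => M s i j) (M' i j) θ) : HasDerivAt M M' θ :=
  hasDerivAt_pi.2 fun i => hasDerivAt_pi.2 fun j => h i j

end Matrix

theorem star_exp_I_mul (θ : ℝ) (n : ℤ) :
    star (exp (I * θ * n)) = exp (I * θ * (-n : ℤ)) := by
  rw [star_def, ← exp_conj]
  push_cast
  simp only [map_mul, conj_I, conj_ofReal, map_intCast]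
  ring_nf

theorem hasDerivAt_exp_I_mul (c : ℂ) (θ : ℝ) :
    HasDerivAt (fun s : ℝ => exp (I * s * c)) (I * c * exp (I * θ * c)) θ := by
  simpa [mul_comm, mul_left_comm, mul_assoc] using
    (((hasDerivAt_id θ).ofReal_comp.const_mul I).mul_const c).cexp

section Floquet

variable {q m : ℕ} {blk : ℤ → ℤ → Matrix (Fin m) (Fin m) ℂ}

theorem floquetOf_congr {blk' : ℤ → ℤ → Matrix (Fin m) (Fin m) ℂ}
    (h : ∀ k, ∀ t ∈ ({k - 1, k, k + 1} : Finset ℤ), blk k t = blk' k t) :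
    floquetOf q m blk = floquetOf q m blk' := by
  funext θ
  ext p r
  simp only [floquetOf, of_apply]
  exact sum_congr rfl fun t ht => by rw [h _ t ht]

theorem floquetOf_isHermitian (hper : ∀ k t, blk (k + q) (t + q) = blk k t)
    (hadj : ∀ k, ∀ t ∈ ({k - 1, k, k + 1} : Finset ℤ), (blk k t)ᴴ = blk t k) (θ : ℝ) :
    (floquetOf q m blk θ).IsHermitian := by
  have hper' : ∀ (n k t : ℤ), blk (k + n * q) (t + n * q) = blk k t := fun n k t => by
    simpa [Function.uncurry, mul_comm] using
      (Function.Periodic.zsmul (f := Function.uncurry blk) (c := ((q : ℤ), (q : ℤ)))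
        (fun x => hper x.1 x.2) n) (k, t)
  ext ⟨K, s⟩ ⟨L, r⟩
  simp only [conjTranspose_apply, floquetOf, of_apply, star_sum]
  -- the term `t` of entry `(L, K)` is the adjoint of the term `K + L - t` of entry `(K, L)`
  refine sum_nbij' (fun t => K + L - t) (fun u => K + L - u) ?_ ?_ (fun _ _ => by ring)
    (fun _ _ => by ring) ?_
  · intro t ht; simp only [mem_insert, mem_singleton] at ht ⊢; omega
  · intro t ht; simp only [mem_insert, mem_singleton] at ht ⊢; omega
  intro t ht
  have hneg : (K : ℤ) + L - t - L = -(t - K) := by ring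
  simp only [hneg, ← Int.dvd_iff_emod_eq_zero, Int.dvd_neg]
  split_ifs with hdvd
  · obtain ⟨n, hn⟩ := hdvd
    have hq : (q : ℤ) ≠ 0 := by have := K.pos; omega
    rw [hn, Int.mul_ediv_cancel_left _ hq, ← mul_neg, Int.mul_ediv_cancel_left _ hq, star_mul',
      star_exp_I_mul, ← conjTranspose_apply, hadj _ _ ht]
    congr 1
    rw [← hper' n K]
    congr 1 <;> linarith
  · exact star_zero _


def floquetPosition (q m : ℕ) : Matrix (Fin q × Fin m) (Fin q × Fin m) ℂ :=
  diagonal fun p => ((p.1 : ℕ) : ℂ)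

theorem hasDerivAt_floquetOf (hq : 0 < q) (θ : ℝ) :
    HasDerivAt (floquetOf q m blk)
      ((q : ℂ)⁻¹ • (floquetOf q m (fun k t => (I * (t - k)) • blk k t) θ
        - I • (floquetOf q m blk θ * floquetPosition q m
          - floquetPosition q m * floquetOf q m blk θ))) θ := by
  refine hasDerivAt_of_hasDerivAt_apply fun p r => ?_
  simp only [floquetPosition, Matrix.smul_apply, Matrix.sub_apply, mul_diagonal, diagonal_mul,
    smul_eq_mul]
  simp only [floquetOf, of_apply, Matrix.smul_apply, smul_eq_mul]
  refine (HasDerivAt.fun_sum (A' := fun t => if (t - (r.1 : ℤ)) % (q : ℤ) = 0 then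
      I * (((t - (r.1 : ℤ)) / (q : ℤ) : ℤ) : ℂ) *
        exp (I * θ * (((t - (r.1 : ℤ)) / (q : ℤ) : ℤ) : ℂ)) * blk (p.1 : ℤ) t p.2 r.2 else 0)
    fun t _ => ?_).congr_deriv ?_
  · split_ifs
    · exact (hasDerivAt_exp_I_mul _ θ).mul_const _
    · exact hasDerivAt_const θ 0
  rw [sum_mul, mul_sum (a := ((p.1 : ℕ) : ℂ)), ← sum_sub_distrib, mul_sum, ← sum_sub_distrib,
    mul_sum]
  -- termwise, `q · i n = i (t - p) - i (r - p)` because `t - r = q n`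
  refine sum_congr rfl fun t _ => ?_
  split_ifs with hc
  · obtain ⟨n, hn⟩ := Int.dvd_of_emod_eq_zero hc
    have hqC : (q : ℂ) ≠ 0 := by exact_mod_cast hq.ne'
    have htn : (t : ℂ) = ((r.1 : ℕ) : ℂ) + q * n := by
      rw [show t = (r.1 : ℕ) + q * n by linarith]
      push_cast
      ring
    rw [hn, Int.mul_ediv_cancel_left _ (by exact_mod_cast hq.ne'), htn]
    field_simp
    push_cast
    ring
  · simp

end Floquet

section Jacobi

variable {m : ℕ} {a b : ℤ → Matrix (Fin m) (Fin m) ℂ}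

theorem jacobiBlock_add_natCast {q : ℕ} (ha : ∀ n, a (n + q) = a n) (hb : ∀ n, b (n + q) = b n)
    (k t : ℤ) : jacobiBlock a b (k + q) (t + q) = jacobiBlock a b k t := by
  rw [jacobiBlock, jacobiBlock, show k + q - 1 = k - 1 + q by ring, ha, ha, hb,
    show k + q + 1 = k + 1 + q by ring]
  simp only [add_left_inj]

theorem conjTranspose_jacobiBlock (hb : ∀ n, (b n).IsHermitian) {k t : ℤ}
    (ht : t ∈ ({k - 1, k, k + 1} : Finset ℤ)) :
    (jacobiBlock a b k t)ᴴ = jacobiBlock a b t k := by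
  simp only [mem_insert, mem_singleton] at ht
  rcases ht with rfl | rfl | rfl
  · rw [jacobiBlock, jacobiBlock, if_neg (by omega), if_neg (by omega), if_neg (by omega),
      if_pos (by omega), conjTranspose_conjTranspose]
  · rw [jacobiBlock, if_pos rfl, (hb _).eq]
  · rw [jacobiBlock, jacobiBlock, if_neg (by omega), if_pos rfl, if_neg (by omega),
      if_neg (by omega), add_sub_cancel_right]

theorem velocityBlock_eq_smul_jacobiBlock (a b : ℤ → Matrix (Fin m) (Fin m) ℂ) (k : ℤ) :
    ∀ t ∈ ({k - 1, k, k + 1} : Finset ℤ),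
      velocityBlock a k t = (I * ((t : ℂ) - k)) • jacobiBlock a b k t := by
  intro t ht
  simp only [mem_insert, mem_singleton] at ht
  rcases ht with rfl | rfl | rfl
  · rw [velocityBlock, jacobiBlock, if_neg (by omega), if_neg (by omega), if_neg (by omega),
      if_neg (by omega)]
    push_cast
    ring_nf
  · simp [velocityBlock, jacobiBlock]
  · rw [velocityBlock, jacobiBlock, if_neg (by omega), if_pos rfl, if_neg (by omega), if_pos rfl]
    push_cast
    ring_nf

end Jacobi

theorem stmt3_general (q m : ℕ) (hq : 0 < q)
    (a b : ℤ → Matrix (Fin m) (Fin m) ℂ)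
    (ha_per : ∀ n, a (n + q) = a n) (hb_per : ∀ n, b (n + q) = b n)
    (hb_herm : ∀ n, (b n).IsHermitian)
    (lam : ℝ → ℝ) (hlam_an : ∀ θ, AnalyticAt ℝ lam θ)
    (P : ℝ → Matrix (Fin q × Fin m) (Fin q × Fin m) ℂ)
    (hP_an : ∀ θ i j, AnalyticAt ℝ (fun s => P s i j) θ)
    (hP_herm : ∀ θ, (P θ).IsHermitian)
    (hP_idem : ∀ θ, P θ * P θ = P θ)
    (hP_eig : ∀ θ (v : Fin q × Fin m → ℂ),
      (floquetOf q m (jacobiBlock a b) θ).mulVec v = (lam θ : ℂ) • v ↔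
        (P θ).mulVec v = v) :
    ∀ θ : ℝ,
      P θ * floquetOf q m (velocityBlock a) θ * P θ =
        ((q : ℂ) * (Complex.ofReal (deriv lam θ))) • P θ := by
  intro θ
  set J := floquetOf q m (jacobiBlock a b)
  have hJP : ∀ s, J s * P s = (lam s : ℂ) • P s := fun s =>
    mul_eq_smul_of_mulVec_eq_smul (hP_idem s) fun v => (hP_eig s v).2
  have hPJ : ∀ s, P s * J s = (lam s : ℂ) • P s := fun s =>
    (floquetOf_isHermitian (jacobiBlock_add_natCast ha_per hb_per)
      (fun _ _ => conjTranspose_jacobiBlock hb_herm) s).mul_comm_of_mul_eq_smul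
      (hP_herm s) (conj_ofReal _) (hJP s)
  have hP : DifferentiableAt ℝ P θ :=
    (hasDerivAt_of_hasDerivAt_apply (M' := of fun i j => deriv (fun s => P s i j) θ)
      fun i j => (hP_an θ i j).differentiableAt.hasDerivAt).differentiableAt
  have hFH := feynman_hellmann (hasDerivAt_floquetOf hq θ) hP (hlam_an θ).differentiableAt
    (fun s => by rw [← Complex.coe_smul]; exact hJP s) (by rw [← Complex.coe_smul]; exact hPJ θ)
    (hP_idem θ)
  set X := floquetPosition q m
  set A := floquetOf q m (fun k t => (I * ((t : ℂ) - k)) • jacobiBlock a b k t) θ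
  have hcomm : P θ * (J θ * X - X * J θ) * P θ = 0 :=
    mul_commutator_mul_eq_zero X (hJP θ) (hPJ θ)
  have hqC : (q : ℂ) ≠ 0 := by exact_mod_cast hq.ne'
  rw [floquetOf_congr (velocityBlock_eq_smul_jacobiBlock a b)]
  calc P θ * A * P θ = (q : ℂ) • (P θ * (q : ℂ)⁻¹ • (A - I • (J θ * X - X * J θ)) * P θ) := by
        rw [mul_smul_comm, smul_mul_assoc, mul_sub, sub_mul, mul_smul_comm, smul_mul_assoc, hcomm,
          smul_zero, sub_zero, smul_smul, mul_inv_cancel₀ hqC, one_smul]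
    _ = ((q : ℂ) * ((deriv lam θ : ℝ) : ℂ)) • P θ := by rw [hFH, mul_smul, Complex.coe_smul]

/-- If `λ(θ)` is an analytic branch of eigenvalues of the Floquet matrices
`J_θ` with associated analytic orthogonal eigenprojections `P(θ)`, then
`P(θ) A_θ P(θ) = q λ'(θ) P(θ)`. -/
theorem stmt3 (q m : ℕ) (hq : 0 < q)
    (a b : ℤ → Matrix (Fin m) (Fin m) ℂ)
    (ha_per : ∀ n, a (n + q) = a n) (hb_per : ∀ n, b (n + q) = b n)
    (hb_herm : ∀ n, (b n).IsHermitian)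
    (ha_det : ∀ n, (a n).det ≠ 0)
    (lam : ℝ → ℝ) (hlam_an : ∀ θ, AnalyticAt ℝ lam θ)
    (P : ℝ → Matrix (Fin q × Fin m) (Fin q × Fin m) ℂ)
    (hP_an : ∀ θ i j, AnalyticAt ℝ (fun s => P s i j) θ)
    (hP_herm : ∀ θ, (P θ).IsHermitian)
    (hP_idem : ∀ θ, P θ * P θ = P θ)
    (hP_eig : ∀ θ (v : Fin q × Fin m → ℂ),
      (floquetOf q m (jacobiBlock a b) θ).mulVec v = (lam θ : ℂ) • v ↔
        (P θ).mulVec v = v) :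
    ∀ θ : ℝ,
      P θ * floquetOf q m (velocityBlock a) θ * P θ =
        ((q : ℂ) * (Complex.ofReal (deriv lam θ))) • P θ :=
  stmt3_general q m hq a b ha_per hb_per hb_herm lam hlam_an P hP_an hP_herm hP_idem hP_eig
end

section
/- Fix a bounded potential W on ℤ, t > 0, p > 0, and m ∈ ℕ. For every ε > 0 there exists δ > 0 such that for all potentials V with ‖V − W‖_∞ < δ and all ψ ∈ ℓ²(ℤ) satisfying |ψ(n)| ≤ m e^{-|n|/m} for all n, one has |⟨ψ, e^{it(Δ+V)} |X|^p e^{-it(Δ+V)} ψ⟩ − ⟨ψ, e^{it(Δ+W)} |X|^p e^{-it(Δ+W)} ψ⟩| < ε. -/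
/-!
Everything is controlled by pointwise bounds against the weight `w n = exp (-|n| / m)`. Since
`w (n ± 1) ≤ e^{1/m} w n`, an operator `Δ + V` with `|V| ≤ C` maps `|u| ≤ a w` to
`|(Δ + V) u| ≤ B a w` with `B = 2 e^{1/m} + C`, and the identity
`H_V^{k+1} - H_W^{k+1} = H_V (H_V^k - H_W^k) + (V - W) H_W^k` bounds `|(H_V^k - H_W^k) ψ|` by
`(1 + B)^k ‖V - W‖_∞ a w`. Summing the exponential series coordinatewise gives
`|e^{-itH} ψ| ≤ e^{|t| B} a w` and `|e^{-itH_V} ψ - e^{-itH_W} ψ| ≤ e^{|t| (1 + B)} ‖V - W‖_∞ a w`,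
so, as `∑ |n|^p w(n)^2 < ∞`, the two moments differ by `O(‖V - W‖_∞)` uniformly in `V` and `ψ`.
-/

open NormedSpace

open scoped Nat ENNReal

section ExpSeries

variable {E F : Type*} [NormedAddCommGroup E] [NormedSpace ℂ E] [CompleteSpace E]
  [NormedAddCommGroup F] [NormedSpace ℂ F]

theorem hasSum_apply_exp_smul (ℓ : E →L[ℂ] F) (T : E →L[ℂ] E) (c : ℂ) (ψ : E) :
    HasSum (fun k : ℕ => (c ^ k / k !) • ℓ ((T ^ k) ψ)) (ℓ (NormedSpace.exp (c • T) ψ)) := by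
  have := (ℓ.comp (ContinuousLinearMap.apply ℂ E ψ)).hasSum
    (exp_series_hasSum_exp' (𝕂 := ℂ) (c • T))
  simpa only [ContinuousLinearMap.comp_apply, ContinuousLinearMap.apply_apply, smul_pow,
    smul_smul, smul_apply, map_smul, div_eq_inv_mul] using this

theorem norm_le_of_hasSum_exp_series {c : ℂ} {z : ℕ → F} {s : F} {a B : ℝ}
    (hs : HasSum (fun k : ℕ => (c ^ k / k !) • z k) s) (hz : ∀ k, ‖z k‖ ≤ B ^ k * a) :
    ‖s‖ ≤ Real.exp (‖c‖ * B) * a := by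
  have hexp : HasSum (fun k : ℕ => (‖c‖ * B) ^ k / k ! * a) (Real.exp (‖c‖ * B) * a) := by
    rw [Real.exp_eq_exp_ℝ]
    exact (expSeries_div_hasSum_exp _).mul_right a
  refine hs.norm_le_of_bounded hexp fun k => ?_
  rw [norm_smul, norm_div, norm_pow, Complex.norm_natCast, mul_pow]
  calc ‖c‖ ^ k / k ! * ‖z k‖ ≤ ‖c‖ ^ k / k ! * (B ^ k * a) := by gcongr; exact hz k
    _ = ‖c‖ ^ k * B ^ k / k ! * a := by ring

end ExpSeries

theorem abs_tsum_mul_norm_sq_sub_le {ι E : Type*} [SeminormedAddCommGroup E] {ρ w : ι → ℝ}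
    {x y : ι → E} {P η : ℝ} (hρ : ∀ i, 0 ≤ ρ i) (hs : Summable fun i => ρ i * w i ^ 2)
    (hx : ∀ i, ‖x i‖ ≤ P * w i) (hy : ∀ i, ‖y i‖ ≤ P * w i)
    (hxy : ∀ i, ‖x i - y i‖ ≤ η * w i) :
    |∑' i, ρ i * ‖x i‖ ^ 2 - ∑' i, ρ i * ‖y i‖ ^ 2| ≤ 2 * P * η * ∑' i, ρ i * w i ^ 2 := by
  have hsummable {z : ι → E} (hz : ∀ i, ‖z i‖ ≤ P * w i) :
      Summable fun i => ρ i * ‖z i‖ ^ 2 := by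
    refine (hs.mul_left (P ^ 2)).of_nonneg_of_le (fun i => by have := hρ i; positivity) fun i => ?_
    calc ρ i * ‖z i‖ ^ 2 ≤ ρ i * (P * w i) ^ 2 := by
          gcongr
          · exact hρ i
          · exact hz i
      _ = P ^ 2 * (ρ i * w i ^ 2) := by ring
  have hterm (i : ι) :
      ‖ρ i * ‖x i‖ ^ 2 - ρ i * ‖y i‖ ^ 2‖ ≤ 2 * P * η * (ρ i * w i ^ 2) := by
    have hdiff : |‖x i‖ - ‖y i‖| ≤ η * w i := (abs_norm_sub_norm_le _ _).trans (hxy i)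
    have hsum : ‖x i‖ + ‖y i‖ ≤ 2 * P * w i := by linarith [hx i, hy i]
    rw [Real.norm_eq_abs, ← mul_sub, sq_sub_sq, abs_mul, abs_mul, abs_of_nonneg (hρ i),
      abs_of_nonneg (by positivity : 0 ≤ ‖x i‖ + ‖y i‖)]
    calc ρ i * ((‖x i‖ + ‖y i‖) * |‖x i‖ - ‖y i‖|) ≤ ρ i * (2 * P * w i * (η * w i)) :=
          mul_le_mul_of_nonneg_left (mul_le_mul hsum hdiff (abs_nonneg _)
            ((add_nonneg (norm_nonneg _) (norm_nonneg _)).trans hsum)) (hρ i)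
      _ = 2 * P * η * (ρ i * w i ^ 2) := by ring
  have := ((hsummable hx).hasSum.sub (hsummable hy).hasSum).norm_le_of_bounded
    (hs.hasSum.mul_left (2 * P * η)) hterm
  rwa [Real.norm_eq_abs] at this

theorem summable_abs_rpow_mul_exp_neg_mul_abs (p : ℝ) {b : ℝ} (hb : 0 < b) :
    Summable fun n : ℤ => |(n : ℝ)| ^ p * Real.exp (-b * |(n : ℝ)|) := by
  have hnat : Summable fun n : ℕ => (n : ℝ) ^ p * Real.exp (-b * n) := by
    refine summable_of_isBigO_nat
      (Real.summable_exp_nat_mul_iff.mpr (neg_lt_zero.mpr (half_pos hb))) ?_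
    have := ((isLittleO_exp_mul_rpow_of_lt p (a := -b) (b := -(b / 2)) (by linarith)).isBigO
      ).comp_tendsto tendsto_natCast_atTop_atTop
    simpa only [Function.comp_def, mul_comm] using this
  refine Summable.of_nat_of_neg ?_ ?_ <;> simpa using hnat

theorem Real.exp_neg_abs_add_div_le (x y : ℝ) {s : ℝ} (hs : 0 ≤ s) :
    Real.exp (-|x + y| / s) ≤ Real.exp (|y| / s) * Real.exp (-|x| / s) := by
  rw [← Real.exp_add, Real.exp_le_exp, ← add_div]
  gcongr
  have := abs_add_le (x + y) (-y)
  rw [add_neg_cancel_right, abs_neg] at this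
  linarith

section Schrodinger

variable {q : ℝ≥0∞} [Fact (1 ≤ q)]

def IsDiscreteSchrodinger (V : ℤ → ℝ)
    (H : lp (fun _ : ℤ => ℂ) q →L[ℂ] lp (fun _ : ℤ => ℂ) q) : Prop :=
  ∀ u n, H u n = u (n + 1) + u (n - 1) + (V n : ℂ) * u n

variable {V W : ℤ → ℝ} {H HV HW : lp (fun _ : ℤ => ℂ) q →L[ℂ] lp (fun _ : ℤ => ℂ) q}
  {w : ℤ → ℝ} {L C a δ : ℝ}

namespace IsDiscreteSchrodinger

theorem norm_apply_le (hH : IsDiscreteSchrodinger V H) (hw_add : ∀ n, w (n + 1) ≤ L * w n)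
    (hw_sub : ∀ n, w (n - 1) ≤ L * w n) (hV : ∀ n, |V n| ≤ C) (ha : 0 ≤ a)
    {u : lp (fun _ : ℤ => ℂ) q} (hu : ∀ n, ‖u n‖ ≤ a * w n) (n : ℤ) :
    ‖H u n‖ ≤ (2 * L + C) * a * w n := by
  have hC : 0 ≤ C := (abs_nonneg _).trans (hV 0)
  have h_add : ‖u (n + 1)‖ ≤ a * (L * w n) := (hu _).trans (mul_le_mul_of_nonneg_left (hw_add n) ha)
  have h_sub : ‖u (n - 1)‖ ≤ a * (L * w n) := (hu _).trans (mul_le_mul_of_nonneg_left (hw_sub n) ha)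
  have h_pot : ‖(V n : ℂ) * u n‖ ≤ C * (a * w n) := by
    rw [norm_mul, Complex.norm_real, Real.norm_eq_abs]
    exact mul_le_mul (hV n) (hu n) (norm_nonneg _) hC
  rw [hH u n]
  calc _ ≤ ‖u (n + 1)‖ + ‖u (n - 1)‖ + ‖(V n : ℂ) * u n‖ := norm_add₃_le
    _ ≤ (2 * L + C) * a * w n := by linarith

theorem norm_pow_apply_le (hH : IsDiscreteSchrodinger V H) (hL : 0 ≤ L)
    (hw_add : ∀ n, w (n + 1) ≤ L * w n) (hw_sub : ∀ n, w (n - 1) ≤ L * w n) (hV : ∀ n, |V n| ≤ C)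
    (ha : 0 ≤ a) {ψ : lp (fun _ : ℤ => ℂ) q} (hψ : ∀ n, ‖ψ n‖ ≤ a * w n) (k : ℕ) (n : ℤ) :
    ‖(H ^ k) ψ n‖ ≤ (2 * L + C) ^ k * a * w n := by
  have hB : 0 ≤ 2 * L + C := by linarith [(abs_nonneg _).trans (hV 0)]
  induction k generalizing n with
  | zero => simpa using hψ n
  | succ k ih =>
    rw [pow_succ', mul_apply_eq_comp]
    exact (hH.norm_apply_le hw_add hw_sub hV (by positivity) ih n).trans_eq (by ring)

theorem norm_pow_apply_sub_pow_apply_le (hHV : IsDiscreteSchrodinger V HV)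
    (hHW : IsDiscreteSchrodinger W HW) (hL : 0 ≤ L) (hw_add : ∀ n, w (n + 1) ≤ L * w n)
    (hw_sub : ∀ n, w (n - 1) ≤ L * w n) (hV : ∀ n, |V n| ≤ C) (hW : ∀ n, |W n| ≤ C)
    (hVW : ∀ n, |V n - W n| ≤ δ) (ha : 0 ≤ a) {ψ : lp (fun _ : ℤ => ℂ) q}
    (hψ : ∀ n, ‖ψ n‖ ≤ a * w n) (k : ℕ) (n : ℤ) :
    ‖(HV ^ k) ψ n - (HW ^ k) ψ n‖ ≤ (1 + (2 * L + C)) ^ k * (δ * a) * w n := by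
  set B := 2 * L + C
  have hB : 0 ≤ B := by linarith [(abs_nonneg _).trans (hV 0)]
  have hδ : 0 ≤ δ := (abs_nonneg _).trans (hVW 0)
  induction k generalizing n with
  | zero => simpa [mul_assoc] using mul_nonneg hδ ((norm_nonneg _).trans (hψ n))
  | succ k ih =>
    set D := (HV ^ k) ψ - (HW ^ k) ψ
    have hD : ∀ j, ‖D j‖ ≤ ((1 + B) ^ k * (δ * a)) * w j := ih
    have hsplit : (HV ^ (k + 1)) ψ n - (HW ^ (k + 1)) ψ n =
        HV D n + ((V n : ℂ) - W n) * (HW ^ k) ψ n := by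
      rw [pow_succ', pow_succ', mul_apply_eq_comp, mul_apply_eq_comp, hHV, hHW, hHV]
      simp only [D, lp.coeFn_sub, Pi.sub_apply]
      ring
    have hVD := hHV.norm_apply_le hw_add hw_sub hV (by positivity) hD n
    have hVWψ : ‖((V n : ℂ) - W n) * (HW ^ k) ψ n‖ ≤ δ * (B ^ k * a * w n) := by
      rw [norm_mul, ← Complex.ofReal_sub, Complex.norm_real, Real.norm_eq_abs]
      exact mul_le_mul (hVW n) (hHW.norm_pow_apply_le hL hw_add hw_sub hW ha hψ k n)
        (norm_nonneg _) hδ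
    have hpow : B ^ k * (δ * (a * w n)) ≤ (1 + B) ^ k * (δ * (a * w n)) := by
      gcongr
      · exact mul_nonneg hδ ((norm_nonneg _).trans (hψ n))
      · linarith
    rw [hsplit]
    calc _ ≤ ‖HV D n‖ + ‖((V n : ℂ) - W n) * (HW ^ k) ψ n‖ := norm_add_le _ _
      _ ≤ (1 + B) ^ (k + 1) * (δ * a) * w n := by
        rw [pow_succ]
        nlinarith [hVD, hVWψ, hpow]

theorem norm_exp_smul_apply_le (hH : IsDiscreteSchrodinger V H) (hL : 0 ≤ L)
    (hw_add : ∀ n, w (n + 1) ≤ L * w n) (hw_sub : ∀ n, w (n - 1) ≤ L * w n)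
    (hV : ∀ n, |V n| ≤ C) (ha : 0 ≤ a) {ψ : lp (fun _ : ℤ => ℂ) q}
    (hψ : ∀ n, ‖ψ n‖ ≤ a * w n) (c : ℂ) (n : ℤ) :
    ‖NormedSpace.exp (c • H) ψ n‖ ≤ Real.exp (‖c‖ * (2 * L + C)) * a * w n :=
  (norm_le_of_hasSum_exp_series (hasSum_apply_exp_smul (lp.evalCLM ℂ (fun _ => ℂ) q n) H c ψ)
    fun k => (hH.norm_pow_apply_le hL hw_add hw_sub hV ha hψ k n).trans_eq
      (mul_assoc _ _ _)).trans_eq (mul_assoc _ _ _).symm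

theorem norm_exp_smul_apply_sub_le (hHV : IsDiscreteSchrodinger V HV)
    (hHW : IsDiscreteSchrodinger W HW) (hL : 0 ≤ L) (hw_add : ∀ n, w (n + 1) ≤ L * w n)
    (hw_sub : ∀ n, w (n - 1) ≤ L * w n) (hV : ∀ n, |V n| ≤ C) (hW : ∀ n, |W n| ≤ C)
    (hVW : ∀ n, |V n - W n| ≤ δ) (ha : 0 ≤ a) {ψ : lp (fun _ : ℤ => ℂ) q}
    (hψ : ∀ n, ‖ψ n‖ ≤ a * w n) (c : ℂ) (n : ℤ) :
    ‖NormedSpace.exp (c • HV) ψ n - NormedSpace.exp (c • HW) ψ n‖ ≤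
      Real.exp (‖c‖ * (1 + (2 * L + C))) * (δ * a) * w n := by
  have hs := (hasSum_apply_exp_smul (lp.evalCLM ℂ (fun _ => ℂ) q n) HV c ψ).sub
    (hasSum_apply_exp_smul (lp.evalCLM ℂ (fun _ => ℂ) q n) HW c ψ)
  simp only [← smul_sub] at hs
  rw [mul_assoc]
  exact norm_le_of_hasSum_exp_series hs fun k =>
    (hHV.norm_pow_apply_sub_pow_apply_le hHW hL hw_add hw_sub hV hW hVW ha hψ k n).trans_eq
      (mul_assoc _ _ _)

end IsDiscreteSchrodinger

end Schrodinger

theorem stmt13_general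
    (W : ℤ → ℝ) (hW : ∃ C, ∀ n, |W n| ≤ C)
    (t p : ℝ)
    (m : ℕ) (hm : 0 < m)
    (HW : lp (fun _ : ℤ => ℂ) 2 →L[ℂ] lp (fun _ : ℤ => ℂ) 2)
    (hHW : ∀ u n, (HW u) n = u (n + 1) + u (n - 1) + (W n : ℂ) * u n) :
    ∀ ε : ℝ, 0 < ε → ∃ δ : ℝ, 0 < δ ∧
      ∀ (V : ℤ → ℝ), (∀ n, |V n - W n| < δ) →
      ∀ (HV : lp (fun _ : ℤ => ℂ) 2 →L[ℂ] lp (fun _ : ℤ => ℂ) 2),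
        (∀ u n, (HV u) n = u (n + 1) + u (n - 1) + (V n : ℂ) * u n) →
      ∀ ψ : lp (fun _ : ℤ => ℂ) 2,
        (∀ n : ℤ, ‖ψ n‖ ≤ (m : ℝ) * Real.exp (-|(n : ℝ)| / m)) →
        |(∑' n : ℤ, |(n : ℝ)| ^ p * ‖(NormedSpace.exp ((-(Complex.I * t)) • HV) ψ) n‖ ^ 2)
          - ∑' n : ℤ, |(n : ℝ)| ^ p * ‖(NormedSpace.exp ((-(Complex.I * t)) • HW) ψ) n‖ ^ 2|
          < ε := by
  intro ε hε
  obtain ⟨C, hC⟩ := hW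
  set w : ℤ → ℝ := fun n => Real.exp (-|(n : ℝ)| / m)
  have hw_add (n : ℤ) : w (n + 1) ≤ Real.exp (1 / m) * w n := by
    simpa [w] using Real.exp_neg_abs_add_div_le n 1 m.cast_nonneg
  have hw_sub (n : ℤ) : w (n - 1) ≤ Real.exp (1 / m) * w n := by
    simpa [w, sub_eq_add_neg] using Real.exp_neg_abs_add_div_le n (-1) m.cast_nonneg
  have hS : Summable fun n : ℤ => |(n : ℝ)| ^ p * w n ^ 2 := by
    refine (summable_abs_rpow_mul_exp_neg_mul_abs p (b := 2 / m) (by positivity)).congr fun n => ?_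
    rw [← Real.exp_nat_mul]
    ring_nf
  set B := 2 * Real.exp (1 / m) + (C + 1)
  set τ := ‖-(Complex.I * t)‖
  set K := 2 * (Real.exp (τ * B) * m) * (Real.exp (τ * (1 + B)) * m) *
    ∑' n : ℤ, |(n : ℝ)| ^ p * w n ^ 2
  obtain ⟨δ, hδ, hδK⟩ := exists_pos_mul_lt hε K
  refine ⟨min δ 1, by positivity, fun V hV HV hHV ψ hψ => ?_⟩
  have hVW (n : ℤ) : |V n - W n| ≤ min δ 1 := (hV n).le
  have hVC (n : ℤ) : |V n| ≤ C + 1 := by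
    linarith [abs_sub_abs_le_abs_sub (V n) (W n), hC n, hVW n, min_le_right δ 1]
  have hWC (n : ℤ) : |W n| ≤ C + 1 := by linarith [hC n]
  calc _ ≤ 2 * (Real.exp (τ * B) * m) * (Real.exp (τ * (1 + B)) * (min δ 1 * m)) *
        ∑' n : ℤ, |(n : ℝ)| ^ p * w n ^ 2 :=
      abs_tsum_mul_norm_sq_sub_le (fun n => by positivity) hS
        (IsDiscreteSchrodinger.norm_exp_smul_apply_le hHV (by positivity) hw_add hw_sub hVC
          m.cast_nonneg hψ _)
        (IsDiscreteSchrodinger.norm_exp_smul_apply_le hHW (by positivity) hw_add hw_sub hWC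
          m.cast_nonneg hψ _)
        (IsDiscreteSchrodinger.norm_exp_smul_apply_sub_le hHV hHW (by positivity) hw_add hw_sub
          hVC hWC hVW m.cast_nonneg hψ _)
    _ = K * min δ 1 := by ring
    _ ≤ K * δ := by gcongr; exact min_le_left δ 1
    _ < ε := hδK

/-- Stability of moments under small `ℓ^∞` perturbations of the
potential: for fixed bounded `W`, `t > 0`, `p > 0`, `m ∈ ℕ`, and every `ε > 0`, there
is `δ > 0` such that for all `V` with `‖V − W‖_∞ < δ` and all `ψ` with
`|ψ(n)| ≤ m e^{-|n|/m}`, the `p`-th moments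
`⟨ψ, e^{itH}|X|^p e^{-itH}ψ⟩ = Σ_n |n|^p |(e^{-itH}ψ)(n)|²` for `H = Δ+V` and
`H = Δ+W` differ by less than `ε`. -/
theorem stmt13
    (W : ℤ → ℝ) (hW : ∃ C, ∀ n, |W n| ≤ C)
    (t p : ℝ) (ht : 0 < t) (hp : 0 < p)
    (m : ℕ) (hm : 0 < m)
    (HW : lp (fun _ : ℤ => ℂ) 2 →L[ℂ] lp (fun _ : ℤ => ℂ) 2)
    (hHW : ∀ u n, (HW u) n = u (n + 1) + u (n - 1) + (W n : ℂ) * u n) :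
    ∀ ε : ℝ, 0 < ε → ∃ δ : ℝ, 0 < δ ∧
      ∀ (V : ℤ → ℝ), (∀ n, |V n - W n| < δ) →
      ∀ (HV : lp (fun _ : ℤ => ℂ) 2 →L[ℂ] lp (fun _ : ℤ => ℂ) 2),
        (∀ u n, (HV u) n = u (n + 1) + u (n - 1) + (V n : ℂ) * u n) →
      ∀ ψ : lp (fun _ : ℤ => ℂ) 2,
        (∀ n : ℤ, ‖ψ n‖ ≤ (m : ℝ) * Real.exp (-|(n : ℝ)| / m)) →
        |(∑' n : ℤ, |(n : ℝ)| ^ p * ‖(NormedSpace.exp ((-(Complex.I * t)) • HV) ψ) n‖ ^ 2)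
          - ∑' n : ℤ, |(n : ℝ)| ^ p * ‖(NormedSpace.exp ((-(Complex.I * t)) • HW) ψ) n‖ ^ 2|
          < ε :=
  stmt13_general W hW t p m hm HW hHW
end
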